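/- Let f, ℓ₀ be smooth real-valued functions on a neighborhood of x ∈ ℝ^d with ∇f(x) = 0, ℓ₀(x) = 0, ∇ℓ₀(x) ≠ 0, and suppose the eikonal equation 2 ∇f · ∇ℓ₀ + |∇ℓ₀|² ℓ₀ = 0 holds in a neighborhood of x. Then Hess f(x) ∇ℓ₀(x) = −½ |∇ℓ₀(x)|² ∇ℓ₀(x); in particular, ∇ℓ₀(x) is an eigenvector of Hess f(x) with negative eigenvalue μ = −|∇ℓ₀(x)|²/2, i.e. |∇ℓ₀(x)|² = −2μ. -/

import Mathlib

open Metric Set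

noncomputable section

/-- The Hessian of `f` at `x`, as the continuous linear map `v ↦ ∂_v (∇f)(x)`. -/
def hessOp {d : ℕ} (f : EuclideanSpace ℝ (Fin d) → ℝ) (x : EuclideanSpace ℝ (Fin d)) :
    EuclideanSpace ℝ (Fin d) →L[ℝ] EuclideanSpace ℝ (Fin d) :=
  fderiv ℝ (gradient f) x

/-!
Differentiating the eikonal identity at `x` in a direction `v`, the terms carrying the factor
`∇f(x) = 0` or `ℓ₀(x) = 0` drop out, leaving `2 ⟪Hess f(x) v, ∇ℓ₀(x)⟫ + |∇ℓ₀(x)|² ⟪∇ℓ₀(x), v⟫ = 0`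
for every `v`. Since the Hessian is symmetric, the left term is `2 ⟪Hess f(x) ∇ℓ₀(x), v⟫`, so
`Hess f(x) ∇ℓ₀(x) = -½ |∇ℓ₀(x)|² ∇ℓ₀(x)`.
-/

open InnerProductSpace Filter Topology
open scoped RealInnerProductSpace

theorem ContinuousLinearMap.apply_eq_smul_of_inner_apply_eq
    {E : Type*} [NormedAddCommGroup E] [InnerProductSpace ℝ E]
    (T : E →L[ℝ] E) (hT : ∀ v w, ⟪T v, w⟫_ℝ = ⟪T w, v⟫_ℝ) {u : E} {a : ℝ}
    (h : ∀ v, ⟪T v, u⟫_ℝ = a * ⟪u, v⟫_ℝ) : T u = a • u :=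
  ext_inner_right ℝ fun v => by rw [hT, h, real_inner_smul_left]

section Hessian

variable {E : Type*} [NormedAddCommGroup E] [InnerProductSpace ℝ E] [CompleteSpace E]
  {f : E → ℝ} {x : E}

theorem inner_fderiv_gradient_apply (f : E → ℝ) (x v w : E) :
    ⟪fderiv ℝ (gradient f) x v, w⟫_ℝ = fderiv ℝ (fderiv ℝ f) x v w := by
  rw [show gradient f = (toDual ℝ E).symm ∘ fderiv ℝ f from rfl,
    (toDual ℝ E).symm.comp_fderiv]
  exact toDual_symm_apply

theorem ContDiffAt.differentiableAt_gradient (hf : ContDiffAt ℝ 2 f x) :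
    DifferentiableAt ℝ (gradient f) x :=
  (toDual ℝ E).symm.toContinuousLinearEquiv.differentiableAt.comp x
    ((hf.fderiv_right (m := 1) le_rfl).differentiableAt one_ne_zero)

theorem ContDiffAt.inner_fderiv_gradient_comm (hf : ContDiffAt ℝ 2 f x) (v w : E) :
    ⟪fderiv ℝ (gradient f) x v, w⟫_ℝ = ⟪fderiv ℝ (gradient f) x w, v⟫_ℝ := by
  rw [inner_fderiv_gradient_apply, inner_fderiv_gradient_apply,
    hf.isSymmSndFDerivAt (by simp [minSmoothness_of_isRCLikeNormedField]) v w]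

theorem inner_fderiv_gradient_of_eikonal {ℓ : E → ℝ}
    (hf : DifferentiableAt ℝ (gradient f) x) (hℓ : DifferentiableAt ℝ ℓ x)
    (hℓ' : DifferentiableAt ℝ (gradient ℓ) x) (hcrit : gradient f x = 0) (hℓx : ℓ x = 0)
    (heik : ∀ᶠ y in 𝓝 x, 2 * ⟪gradient f y, gradient ℓ y⟫_ℝ + ‖gradient ℓ y‖ ^ 2 * ℓ y = 0)
    (v : E) :
    ⟪fderiv ℝ (gradient f) x v, gradient ℓ x⟫_ℝ =
      -(1 / 2) * ‖gradient ℓ x‖ ^ 2 * ⟪gradient ℓ x, v⟫_ℝ := by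
  have hinner := hf.inner ℝ hℓ'
  have hnorm : DifferentiableAt ℝ (fun y => ‖gradient ℓ y‖ ^ 2) x := hℓ'.norm_sq ℝ
  have hzero := congrArg (· v) (EventuallyEq.fderiv_eq (𝕜 := ℝ) (f := fun _ => (0 : ℝ)) heik)
  simp only [fderiv_const_apply, zero_apply] at hzero
  rw [fderiv_fun_add (hinner.const_mul 2) (hnorm.fun_mul hℓ), fderiv_const_mul hinner,
    fderiv_fun_mul hnorm hℓ] at hzero
  simp only [add_apply, smul_apply, smul_eq_mul, fderiv_inner_apply ℝ hf hℓ', hcrit, hℓx,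
    inner_zero_left, zero_mul, zero_add, add_zero, ← inner_gradient_left] at hzero
  linarith

end Hessian

/-- **`∇ℓ₀` is an eigenvector of the Hessian at critical points.**
Let `f, ℓ₀` be smooth near `x ∈ ℝ^d` with `∇f(x) = 0`, `ℓ₀(x) = 0`, `∇ℓ₀(x) ≠ 0`,
and suppose the eikonal equation `2 ∇f·∇ℓ₀ + |∇ℓ₀|² ℓ₀ = 0` holds near `x`. Then
`Hess f(x) ∇ℓ₀(x) = -½|∇ℓ₀(x)|² ∇ℓ₀(x)`; in particular `∇ℓ₀(x)` is an eigenvector of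
`Hess f(x)` with negative eigenvalue `μ = -|∇ℓ₀(x)|²/2`, i.e. `|∇ℓ₀(x)|² = -2μ`. -/
theorem hess_gradient_eigenvector_of_eikonal
    {d : ℕ} (f ℓ₀ : EuclideanSpace ℝ (Fin d) → ℝ) (x : EuclideanSpace ℝ (Fin d))
    (U : Set (EuclideanSpace ℝ (Fin d))) (hU : IsOpen U) (hxU : x ∈ U)
    (hf : ContDiffOn ℝ (⊤ : ℕ∞) f U) (hℓ₀ : ContDiffOn ℝ (⊤ : ℕ∞) ℓ₀ U)
    (hcrit : gradient f x = 0) (hℓx : ℓ₀ x = 0) (hgrad : gradient ℓ₀ x ≠ 0)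
    (heik : ∀ y ∈ U,
      2 * (inner ℝ (gradient f y) (gradient ℓ₀ y) : ℝ) + ‖gradient ℓ₀ y‖ ^ 2 * ℓ₀ y = 0) :
    hessOp f x (gradient ℓ₀ x) = (- (1 / 2) * ‖gradient ℓ₀ x‖ ^ 2) • gradient ℓ₀ x ∧
      ∃ μ : ℝ, μ < 0 ∧ ‖gradient ℓ₀ x‖ ^ 2 = - 2 * μ ∧
        hessOp f x (gradient ℓ₀ x) = μ • gradient ℓ₀ x := by
  have hUx : U ∈ 𝓝 x := hU.mem_nhds hxU
  have hf2 : ContDiffAt ℝ 2 f x := (hf.contDiffAt hUx).of_le (WithTop.coe_le_coe.mpr le_top)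
  have hℓ2 : ContDiffAt ℝ 2 ℓ₀ x := (hℓ₀.contDiffAt hUx).of_le (WithTop.coe_le_coe.mpr le_top)
  have hmain : hessOp f x (gradient ℓ₀ x) = (-(1 / 2) * ‖gradient ℓ₀ x‖ ^ 2) • gradient ℓ₀ x :=
    (hessOp f x).apply_eq_smul_of_inner_apply_eq hf2.inner_fderiv_gradient_comm
      (inner_fderiv_gradient_of_eikonal hf2.differentiableAt_gradient
        (hℓ2.differentiableAt two_ne_zero) hℓ2.differentiableAt_gradient hcrit hℓx
        (eventually_of_mem hUx heik))
  refine ⟨hmain, _, ?_, by ring, hmain⟩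
  have hpos : 0 < ‖gradient ℓ₀ x‖ := norm_pos_iff.mpr hgrad
  nlinarith
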